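/- Let u, v ∈ ℝ⁴ be spacelike vectors such that the corresponding open disks on S² are equal: {x ∈ S² : u₁x₁ + u₂x₂ + u₃x₃ > u₄} = {x ∈ S² : v₁x₁ + v₂x₂ + v₃x₃ > v₄}. Then v = cu for some real c > 0. In particular, if u and v are unit spacelike (lie on the de Sitter sphere) and determine the same open disk, then u = v; so the map from points of the de Sitter sphere to oriented disks on S² is injective. -/

import Mathlib

/-- The Lorentz (Minkowski) inner product on ℝ⁴. -/
def lor (u v : Fin 4 → ℝ) : ℝ :=
  u 0 * v 0 + u 1 * v 1 + u 2 * v 2 - u 3 * v 3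

/-- The unit sphere S² in ℝ³. -/
def sphere2 : Set (Fin 3 → ℝ) :=
  {x | x 0 ^ 2 + x 1 ^ 2 + x 2 ^ 2 = 1}

/-- The open disk on S² corresponding to a spacelike vector. -/
def diskOf (n : Fin 4 → ℝ) : Set (Fin 3 → ℝ) :=
  {x ∈ sphere2 | n 3 < n 0 * x 0 + n 1 * x 1 + n 2 * x 2}

def dot3 (x y : Fin 3 → ℝ) : ℝ := x 0 * y 0 + x 1 * y 1 + x 2 * y 2

set_option maxHeartbeats 2000000 in
lemma key (w w' : Fin 3 → ℝ) (d d' : ℝ)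
    (h : ∀ x : Fin 3 → ℝ, x 0 ^ 2 + x 1 ^ 2 + x 2 ^ 2 = 1 →
      (d < dot3 w x ↔ d' < dot3 w' x))
    (hw : d ^ 2 < dot3 w w) :
    ∃ c : ℝ, 0 < c ∧ (∀ i, w' i = c * w i) ∧ d' = c * d := by
  have hww : 0 < dot3 w w := lt_of_le_of_lt (sq_nonneg d) hw
  simp only [dot3] at hw hww
  set r := Real.sqrt (w 0 * w 0 + w 1 * w 1 + w 2 * w 2) with hrdef
  have hr0 : 0 < r := Real.sqrt_pos.mpr hww
  have hrne : r ≠ 0 := hr0.ne'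
  have hr2 : r ^ 2 = w 0 * w 0 + w 1 * w 1 + w 2 * w 2 := Real.sq_sqrt hww.le
  set m : Fin 3 → ℝ := fun i => r⁻¹ * w i with hmdef
  have hr2' : r ^ 2 = w 0 ^ 2 + w 1 ^ 2 + w 2 ^ 2 := by rw [hr2]; ring
  have hmm : m 0 ^ 2 + m 1 ^ 2 + m 2 ^ 2 = 1 := by
    simp only [hmdef]
    field_simp
    linarith [hr2']
  have hdr : d < r := by nlinarith
  set t := d / r with htdef
  have htr : t * r = d := by rw [htdef]; field_simp
  have ht2 : t ^ 2 < 1 := by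
    rw [htdef, div_pow, div_lt_one (by positivity)]
    nlinarith
  have ht1 : t < 1 := by nlinarith
  have htm1 : -1 < t := by nlinarith [sq_nonneg (t + 1)]
  set e := Real.sqrt (1 - t ^ 2) with hedef
  have he0 : 0 < e := Real.sqrt_pos.mpr (by linarith)
  have he2 : e ^ 2 = 1 - t ^ 2 := Real.sq_sqrt (by linarith)
  have hwm : w 0 * m 0 + w 1 * m 1 + w 2 * m 2 = r := by
    simp only [hmdef]
    field_simp
    linarith [hr2']
  set A := dot3 w' m with hAdef
  simp only [dot3] at hAdef
  -- step 1: circle values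
  have step1 : ∀ p : Fin 3 → ℝ, p 0 ^ 2 + p 1 ^ 2 + p 2 ^ 2 = 1 →
      m 0 * p 0 + m 1 * p 1 + m 2 * p 2 = 0 →
      t * A + e * (w' 0 * p 0 + w' 1 * p 1 + w' 2 * p 2) = d' := by
    intro p hpp hmp
    have hwp : w 0 * p 0 + w 1 * p 1 + w 2 * p 2 = 0 := by
      simp only [hmdef] at hmp
      field_simp at hmp
      linarith
    set B := w' 0 * p 0 + w' 1 * p 1 + w' 2 * p 2 with hBdef
    have key_in : ∀ s : ℝ, t < s → s ^ 2 ≤ 1 →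
        d' < s * A + Real.sqrt (1 - s ^ 2) * B := by
      intro s hs hs1
      set q := Real.sqrt (1 - s ^ 2) with hqdef
      have hq2 : q ^ 2 = 1 - s ^ 2 := Real.sq_sqrt (by linarith)
      set x : Fin 3 → ℝ := fun i => s * m i + q * p i with hxdef
      have hxs : x 0 ^ 2 + x 1 ^ 2 + x 2 ^ 2 = 1 := by
        simp only [hxdef]
        linear_combination s ^ 2 * hmm + q ^ 2 * hpp + 2 * s * q * hmp + hq2
      have hwx : dot3 w x = s * r := by
        simp only [dot3, hxdef]
        linear_combination s * hwm + q * hwp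
      have hin : d < dot3 w x := by rw [hwx]; nlinarith
      have hout := (h x hxs).mp hin
      have hwx' : dot3 w' x = s * A + q * B := by
        simp only [dot3, hxdef]
        linear_combination s * hAdef.symm
      rw [hwx'] at hout
      exact hout
    have upper : t * A + e * B ≤ d' := by
      set x : Fin 3 → ℝ := fun i => t * m i + e * p i with hxdef
      have hxs : x 0 ^ 2 + x 1 ^ 2 + x 2 ^ 2 = 1 := by
        simp only [hxdef]
        linear_combination t ^ 2 * hmm + e ^ 2 * hpp + 2 * t * e * hmp + he2
      have hwx : dot3 w x = d := by
        simp only [dot3, hxdef]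
        linear_combination t * hwm + e * hwp + htr
      have hnot : ¬ d < dot3 w x := by rw [hwx]; exact lt_irrefl d
      have hnot2 : ¬ d' < dot3 w' x := fun hc => hnot ((h x hxs).mpr hc)
      have hwx' : dot3 w' x = t * A + e * B := by
        simp only [dot3, hxdef]
        linear_combination t * hAdef.symm
      rw [hwx'] at hnot2
      linarith [not_lt.mp hnot2]
    have lower : d' ≤ t * A + e * B := by
      set g : ℝ → ℝ := fun s => s * A + Real.sqrt (1 - s ^ 2) * B with hgdef
      have hg : Continuous g := by
        apply Continuous.add
        · exact continuous_id.mul continuous_const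
        · exact (Real.continuous_sqrt.comp (by continuity)).mul continuous_const
      have htend : Filter.Tendsto g (nhdsWithin t (Set.Ioi t)) (nhds (g t)) :=
        (hg.tendsto t).mono_left nhdsWithin_le_nhds
      have hev : ∀ᶠ s in nhdsWithin t (Set.Ioi t), d' ≤ g s := by
        filter_upwards [Ioo_mem_nhdsGT_of_mem (Set.mem_Ico.mpr ⟨le_refl t, ht1⟩)] with s hs
        have hs2 : s ^ 2 ≤ 1 := by
          nlinarith [mul_pos (show (0:ℝ) < 1 - s by linarith [hs.2])
            (show (0:ℝ) < 1 + s by linarith [hs.1])]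
        exact le_of_lt (key_in s hs.1 hs2)
      have hle := ge_of_tendsto htend hev
      simpa [hgdef, ← hedef] using hle
    linarith
  -- a unit vector perpendicular to m exists
  have hp0 : ∃ p : Fin 3 → ℝ, p 0 ^ 2 + p 1 ^ 2 + p 2 ^ 2 = 1 ∧
      m 0 * p 0 + m 1 * p 1 + m 2 * p 2 = 0 := by
    by_cases hab : m 0 = 0 ∧ m 1 = 0
    · exact ⟨![1, 0, 0], by norm_num; rfl, by simp [hab.1]⟩
    · have hs2 : 0 < m 0 ^ 2 + m 1 ^ 2 := by
        rcases not_and_or.mp hab with h0 | h0 <;> positivity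
      set ss := Real.sqrt (m 0 ^ 2 + m 1 ^ 2) with hssdef
      have hss0 : 0 < ss := Real.sqrt_pos.mpr hs2
      have hss2 : ss ^ 2 = m 0 ^ 2 + m 1 ^ 2 := Real.sq_sqrt hs2.le
      refine ⟨fun i => ss⁻¹ * (![-(m 1), m 0, 0] i), ?_, ?_⟩
      · show (ss⁻¹ * -(m 1)) ^ 2 + (ss⁻¹ * m 0) ^ 2 + (ss⁻¹ * 0) ^ 2 = 1
        have hssne : ss ≠ 0 := hss0.ne'
        field_simp
        linarith [hss2]
      · show m 0 * (ss⁻¹ * -(m 1)) + m 1 * (ss⁻¹ * m 0) + m 2 * (ss⁻¹ * 0) = 0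
        ring
  obtain ⟨p0, hp1, hp2⟩ := hp0
  have e1 := step1 p0 hp1 hp2
  have e2 := step1 (fun i => -(p0 i)) (by ring_nf; linear_combination hp1)
    (by linear_combination -hp2)
  have e2' : t * A - e * (w' 0 * p0 0 + w' 1 * p0 1 + w' 2 * p0 2) = d' := by
    linear_combination e2
  have heB : e * (w' 0 * p0 0 + w' 1 * p0 1 + w' 2 * p0 2) = 0 := by linarith [e1, e2']
  have hB0 : w' 0 * p0 0 + w' 1 * p0 1 + w' 2 * p0 2 = 0 :=
    (mul_eq_zero.mp heB).resolve_left he0.ne'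
  have hd' : d' = t * A := by rw [hB0] at e1; linarith
  -- A > 0
  have hmA : d' < A := by
    have hin := (h m hmm).mp (by simp only [dot3]; rw [hwm]; exact hdr)
    simp only [dot3] at hin
    linarith [hin, hAdef]
  have hA0 : 0 < A := by
    rcases lt_or_ge 0 A with hA | hA
    · exact hA
    · exfalso
      have h1 : A * (1 - t) ≤ 0 := mul_nonpos_of_nonpos_of_nonneg hA (by linarith)
      nlinarith [h1, hmA, hd']
  -- w' = A • m
  have hq : ∀ i, w' i = A * m i := by
    by_contra hq0
    push_neg at hq0
    set q : Fin 3 → ℝ := fun i => w' i - A * m i with hqdef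
    have hq_app : ∀ i, q i = w' i - A * m i := fun i => rfl
    have hw'i : ∀ i, w' i = q i + A * m i := fun i => by rw [hq_app i]; ring
    have hmq : m 0 * q 0 + m 1 * q 1 + m 2 * q 2 = 0 := by
      simp only [hq_app]
      linear_combination -hAdef - A * hmm
    have hqq : 0 < q 0 ^ 2 + q 1 ^ 2 + q 2 ^ 2 := by
      obtain ⟨i, hi⟩ := hq0
      have hi' : q i ≠ 0 := sub_ne_zero.mpr hi
      fin_cases i <;> positivity
    set ρ := Real.sqrt (q 0 ^ 2 + q 1 ^ 2 + q 2 ^ 2) with hρdef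
    have hρ0 : 0 < ρ := Real.sqrt_pos.mpr hqq
    have hρne : ρ ≠ 0 := hρ0.ne'
    have hρ2 : ρ ^ 2 = q 0 ^ 2 + q 1 ^ 2 + q 2 ^ 2 := Real.sq_sqrt hqq.le
    have e3 := step1 (fun i => ρ⁻¹ * q i)
      (by field_simp; linarith [hρ2]) (by field_simp; linarith [hmq])
    have hexp : w' 0 * q 0 + w' 1 * q 1 + w' 2 * q 2 = ρ ^ 2 := by
      rw [hw'i 0, hw'i 1, hw'i 2]
      linear_combination A * hmq + hρ2.symm
    have hw'q : w' 0 * (ρ⁻¹ * q 0) + w' 1 * (ρ⁻¹ * q 1) + w' 2 * (ρ⁻¹ * q 2) = ρ := by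
      field_simp
      linarith [hexp]
    rw [hw'q] at e3
    linarith only [e3, hd', mul_pos he0 hρ0]
  refine ⟨A / r, by positivity, ?_, ?_⟩
  · intro i
    rw [hq i]
    simp only [hmdef]
    field_simp
  · rw [hd', htdef]
    field_simp

theorem stmt_13 (u v : Fin 4 → ℝ)
    (hu : 0 < lor u u) (hv : 0 < lor v v)
    (hdisk : diskOf u = diskOf v) :
    (∃ c : ℝ, 0 < c ∧ v = c • u) ∧
    (lor u u = 1 → lor v v = 1 → u = v) := by
  have h : ∀ x : Fin 3 → ℝ, x 0 ^ 2 + x 1 ^ 2 + x 2 ^ 2 = 1 →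
      (u 3 < dot3 ![u 0, u 1, u 2] x ↔ v 3 < dot3 ![v 0, v 1, v 2] x) := by
    intro x hx
    have hxe := Set.ext_iff.mp hdisk x
    simp only [diskOf, sphere2, Set.mem_setOf_eq, Set.mem_sep_iff, dot3] at hxe ⊢
    simp only [Matrix.cons_val_zero, Matrix.cons_val_one, Matrix.head_cons,
      Matrix.cons_val_two, Matrix.tail_cons]
    constructor
    · intro h1; exact (hxe.mp ⟨hx, h1⟩).2
    · intro h1; exact (hxe.mpr ⟨hx, h1⟩).2
  have hw : (u 3) ^ 2 < dot3 ![u 0, u 1, u 2] ![u 0, u 1, u 2] := by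
    simp only [dot3, Matrix.cons_val_zero, Matrix.cons_val_one, Matrix.head_cons,
      Matrix.cons_val_two, Matrix.tail_cons]
    unfold lor at hu
    nlinarith
  obtain ⟨c, hc, hci, hcd⟩ := key ![u 0, u 1, u 2] ![v 0, v 1, v 2] (u 3) (v 3) h hw
  have h0 := hci 0
  have h1 := hci 1
  have h2 := hci 2
  simp only [Matrix.cons_val_zero, Matrix.cons_val_one, Matrix.head_cons,
    Matrix.cons_val_two, Matrix.tail_cons] at h0 h1 h2
  have hvu : v = c • u := by
    funext i
    fin_cases i
    · exact h0
    · exact h1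
    · exact h2
    · exact hcd
  refine ⟨⟨c, hc, hvu⟩, fun hu1 hv1 => ?_⟩
  have hlv : lor v v = c ^ 2 * lor u u := by
    rw [hvu]
    simp only [lor, Pi.smul_apply, smul_eq_mul]
    ring
  rw [hu1, hv1] at hlv
  have hc1 : c = 1 := by nlinarith
  rw [hvu, hc1, one_smul]
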